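/- Let w be a right special Sturmian word over {a,b}. Then exactly one of wa and wb is closed (and the other is open). -/

import Mathlib

open scoped Classical

variable {α : Type*}

def IsBorder (u w : List α) : Prop := u <+: w ∧ u <:+ w ∧ u ≠ w

def InternalOcc (u w : List α) : Prop := ∃ p s : List α, p ≠ [] ∧ s ≠ [] ∧ w = p ++ u ++ s

def ClosedWord (w : List α) : Prop := w = [] ∨ ∃ u, IsBorder u w ∧ ¬ InternalOcc u w

noncomputable def minPer (w : List α) : ℕ :=
  if w = [] then 1 else sInf {p | ∃ v, IsBorder v w ∧ p = w.length - v.length}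

noncomputable def ocL (w : List α) : List ℕ :=
  (List.range w.length).map fun i => if ClosedWord (w.take (i+1)) then 1 else 0

def prefW (w : ℕ → α) (n : ℕ) : List α := (List.range n).map w

noncomputable def ocI (w : ℕ → α) : ℕ → ℕ := fun n =>
  if ClosedWord (prefW w (n+1)) then 1 else 0

def InfixAt (w : ℕ → α) (u : List α) (i : ℕ) : Prop :=
  u = (List.range u.length).map fun j => w (i + j)

def RecurrentWord (w : ℕ → α) : Prop :=
  ∀ u : List α, (∃ i, InfixAt w u i) → ∀ N, ∃ i, N ≤ i ∧ InfixAt w u i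

def UltPeriodic (s : ℕ → α) : Prop := ∃ p, 0 < p ∧ ∃ N, ∀ n, N ≤ n → s (n + p) = s n

def PerWord (s : ℕ → α) : Prop := ∃ p, 0 < p ∧ ∀ n, s (n + p) = s n

def OccurrenceAt (u w : List α) (i : ℕ) : Prop := i + u.length ≤ w.length ∧ u <+: w.drop i

def RepeatedIn (u w : List α) : Prop := ∃ i j, i < j ∧ OccurrenceAt u w i ∧ OccurrenceAt u w j

def CompleteReturnTo (w u : List α) : Prop :=
  u <+: w ∧ u <:+ w ∧ u ≠ w ∧ ∀ i, OccurrenceAt u w i → i = 0 ∨ i = w.length - u.length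

def BalancedWord (w : List Bool) : Prop :=
  ∀ u v : List Bool, u <:+: w → v <:+: w → u.length = v.length →
    ((u.count true : ℤ) - v.count true).natAbs ≤ 1

def RightSpecialSturmian (w : List Bool) : Prop := ∀ x : Bool, BalancedWord (w ++ [x])

def stdSeq (d : ℕ → ℕ) : ℕ → List Bool
  | 0 => [true]
  | 1 => [false]
  | n+2 => (List.replicate (d n) (stdSeq d (n+1))).flatten ++ stdSeq d n

def stdInf (d : ℕ → ℕ) : ℕ → Bool := fun i => (stdSeq d (i+2)).getD i false

def IsStandardWord (s : List Bool) : Prop :=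
  ∃ d : ℕ → ℕ, (∀ n, 1 ≤ n → 1 ≤ d n) ∧ ∃ m, s = stdSeq d m

def IsCentral (u : List Bool) : Prop := ∃ x y : Bool, x ≠ y ∧ IsStandardWord (u ++ [x, y])

def LeftSpecial (u w : List Bool) : Prop := (false :: u) <:+: w ∧ (true :: u) <:+: w

def RightSpecial (u w : List Bool) : Prop := (u ++ [false]) <:+: w ∧ (u ++ [true]) <:+: w

def IsSemicentral (v : List Bool) : Prop :=
  ∃ u : List Bool,
    (u <+: v ∧ RepeatedIn u v ∧ ∀ z, z <+: v → RepeatedIn z v → z.length ≤ u.length) ∧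
    (u <:+ v ∧ RepeatedIn u v ∧ ∀ z, z <:+ v → RepeatedIn z v → z.length ≤ u.length) ∧
    (LeftSpecial u v ∧ ∀ z, LeftSpecial z v → z.length ≤ u.length ∧ (z.length = u.length → z = u)) ∧
    (RightSpecial u v ∧ ∀ z, RightSpecial z v → z.length ≤ u.length ∧ (z.length = u.length → z = u))

def contFront : List ℕ → ℕ
  | [] => 1
  | [x] => x
  | x :: y :: l => x * contFront (y :: l) + contFront l

def paperK (l : List ℕ) : ℕ := contFront l.reverse

noncomputable def lbl (u : List α) : ℕ := sSup {n | ∃ v, IsBorder v u ∧ v.length = n}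

noncomputable def Bp (w : List α) (i : ℕ) : ℕ :=
  (Finset.range (i+1)).sup fun j => lbl (w.take j)

/-!
Let `v` be the longest border of `w` and `y` the letter following it in `w`. Then `v ++ [y]` is a
border of `w ++ [y]` with no internal occurrence: an internal occurrence would make a prefix of `w`
longer than `v` recur inside `w`; extending it letter by letter along that occurrence, it either
reaches the end of `w` (a longer border) or becomes right special, and by balance the right special
factor of each length is the suffix of `w` of that length (again a longer border).

On the other hand every nonempty border of `w ++ [!y]` is `u ++ [!y]` for a border `u` of `w`
strictly shorter than `v`, so it occurs inside `v`, hence inside `w ++ [!y]` at the position where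
`v` ends `w`.
-/

lemma BalancedWord.false_of_infix {w : List Bool} (hb : BalancedWord w) (a : Bool) (r : List Bool)
    (h₁ : (a :: (r ++ [a])) <:+: w) (h₂ : ((!a) :: (r ++ [!a])) <:+: w) : False := by
  have := hb _ _ h₁ h₂ (by simp)
  cases a <;> simp [List.count_append] at this <;> omega

lemma RightSpecial.append_infix {X w : List Bool} (h : RightSpecial X w) (b : Bool) :
    (X ++ [b]) <:+: w := by
  cases b
  exacts [h.1, h.2]

lemma RightSpecialSturmian.eq_of_rightSpecial_of_suffix {w : List Bool}
    (h : RightSpecialSturmian w) :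
    ∀ {X Y : List Bool}, RightSpecial X w → Y <:+ w → X.length = Y.length → X = Y
  | [], [], _, _, _ => rfl
  | x :: X, y :: Y, hX, hY, hlen => by
    have hXw : RightSpecial X w :=
      ⟨((List.suffix_cons x _).isInfix).trans hX.1, ((List.suffix_cons x _).isInfix).trans hX.2⟩
    obtain rfl : X = Y :=
      h.eq_of_rightSpecial_of_suffix hXw ((List.suffix_cons y Y).trans hY) (by simpa using hlen)
    obtain rfl | rfl : x = y ∨ x = !y := by cases x <;> cases y <;> simp
    · rfl
    · have hy : (y :: (X ++ [y])) <:+: w ++ [y] :=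
        (List.suffix_concat_iff.mpr (Or.inr ⟨_, rfl, hY⟩)).isInfix
      exact (BalancedWord.false_of_infix (h y) y X hy
        ((hX.append_infix _).trans (List.prefix_append w [y]).isInfix)).elim

lemma IsBorder.length_lt {u w : List α} (h : IsBorder u w) : u.length < w.length :=
  lt_of_le_of_ne h.1.length_le fun hlen => h.2.2 (h.1.eq_of_length hlen)

lemma IsBorder.exists_append_singleton_prefix {v w : List α} (h : IsBorder v w) :
    ∃ y, v ++ [y] <+: w := by
  obtain ⟨t, ht⟩ := h.1
  obtain ⟨y, t, rfl⟩ :=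
    List.exists_cons_of_ne_nil fun ht0 : t = [] => h.2.2 (by simpa [ht0] using ht)
  exact ⟨y, t, by simpa using ht⟩

def IsLongestBorder (v w : List α) : Prop :=
  IsBorder v w ∧ ∀ u, IsBorder u w → u.length ≤ v.length

lemma exists_isLongestBorder {w : List α} (hw : w ≠ []) : ∃ v, IsLongestBorder v w := by
  have hnil : IsBorder [] w := ⟨List.nil_prefix, List.nil_suffix, hw.symm⟩
  obtain ⟨v, hv, hmax⟩ := Finset.exists_max_image (w.inits.toFinset.filter (IsBorder · w))
    List.length ⟨[], by simpa using hnil⟩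
  simp only [Finset.mem_filter, List.mem_toFinset, List.mem_inits] at hv hmax
  exact ⟨v, hv.2, fun u hu => hmax u ⟨hu.1, hu⟩⟩

lemma InternalOcc.exists_of_append_singleton {u w : List α} {x : α}
    (h : InternalOcc u (w ++ [x])) : ∃ p s, p ≠ [] ∧ w = p ++ u ++ s := by
  obtain ⟨p, s, hp, hs, he⟩ := h
  obtain ⟨s, z, rfl⟩ := (List.eq_nil_or_concat s).resolve_left hs
  rw [List.concat_eq_append, ← List.append_assoc] at he
  exact ⟨p, s, hp, (List.append_inj' he rfl).1⟩

lemma RightSpecialSturmian.exists_isBorder_of_prefix_recurs {w : List Bool}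
    (h : RightSpecialSturmian w) {p : List Bool} (hp : p ≠ []) :
    ∀ (s X : List Bool), w = p ++ X ++ s → X <+: w → ∃ v, IsBorder v w ∧ X.length ≤ v.length
  | [], X, he, hX => by
    refine ⟨X, ⟨hX, ⟨p, by simpa using he.symm⟩, ?_⟩, le_rfl⟩
    rintro rfl
    simp [hp] at he
  | c :: s, X, he, hX => by
    obtain ⟨t, ht⟩ := hX
    obtain ⟨d, t, rfl⟩ : ∃ d t', t = d :: t' := by
      refine List.exists_cons_of_ne_nil ?_
      rintro rfl
      have := congrArg List.length he
      simp only [← ht, List.length_append, List.length_nil, List.length_cons] at this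
      omega
    have hXd : X ++ [d] <+: w := ⟨t, by simp [← ht]⟩
    have hXc : w = p ++ (X ++ [c]) ++ s := by simp [he]
    by_cases hcd : c = d
    · subst hcd
      obtain ⟨v, hv, hlen⟩ := h.exists_isBorder_of_prefix_recurs hp s _ hXc hXd
      exact ⟨v, hv, by simp only [List.length_append, List.length_singleton] at hlen; omega⟩
    · have hc : X ++ [c] <:+: w := ⟨p, s, hXc.symm⟩
      have hXs : RightSpecial X w := by
        obtain rfl : d = !c := by cases c <;> cases d <;> simp_all
        cases c
        exacts [⟨hc, hXd.isInfix⟩, ⟨hXd.isInfix, hc⟩]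
      have hXY : X = w.drop (w.length - X.length) :=
        h.eq_of_rightSpecial_of_suffix hXs (List.drop_suffix _ w) (by simp [← ht])
      refine ⟨X, ⟨⟨_, ht⟩, hXY ▸ List.drop_suffix _ w, fun hXw => ?_⟩, le_rfl⟩
      simp [hXw] at ht

lemma RightSpecialSturmian.closedWord_append {w v : List Bool} (h : RightSpecialSturmian w)
    (hv : IsLongestBorder v w) {y : Bool} (hy : v ++ [y] <+: w) : ClosedWord (w ++ [y]) := by
  refine Or.inr ⟨v ++ [y], ⟨hy.trans (List.prefix_append w [y]),
    List.suffix_concat_iff.mpr (Or.inr ⟨v, rfl, hv.1.2.1⟩), ?_⟩, fun hocc => ?_⟩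
  · intro he
    simpa using hv.1.length_lt.ne (by simpa using congrArg List.length he)
  · obtain ⟨p, s, hp, he⟩ := hocc.exists_of_append_singleton
    obtain ⟨u, hu, hlen⟩ := h.exists_isBorder_of_prefix_recurs hp s _ he hy
    have := hv.2 u hu
    simp only [List.length_append, List.length_singleton] at hlen
    omega

lemma not_closedWord_append {w v : List α} (hv : IsLongestBorder v w) {y c : α}
    (hy : v ++ [y] <+: w) (hc : c ≠ y) : ¬ ClosedWord (w ++ [c]) := by
  have hw : w ≠ [] := by rintro rfl; simpa using hy.length_le
  rintro (hnil | ⟨u, ⟨hpre, hsuf, hne⟩, hocc⟩)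
  · simp at hnil
  obtain rfl | ⟨u, rfl, hus⟩ := List.suffix_concat_iff.mp hsuf
  · exact hocc ⟨w, [c], hw, by simp, by simp⟩
  have huc : u ++ [c] <+: w := (List.prefix_concat_iff.mp hpre).resolve_left hne
  have hub : IsBorder u w :=
    ⟨(List.prefix_append u [c]).trans huc, hus, by rintro rfl; simpa using huc.length_le⟩
  have hlt : u.length < v.length := by
    refine lt_of_le_of_ne (hv.2 u hub) fun hlen => hc ?_
    obtain rfl : u = v := List.prefix_of_prefix_length_le hub.1 hv.1.1 hlen.le
      |>.eq_of_length hlen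
    simpa using List.prefix_of_prefix_length_le huc hy (by simp)
  obtain ⟨r, hr⟩ := List.prefix_of_prefix_length_le huc
    ((List.prefix_append v [y]).trans hy) (by simpa using hlt)
  obtain ⟨q, hq⟩ := hv.1.2.1
  refine hocc ⟨q, r ++ [c], fun hq0 => hv.1.2.2 ?_, by simp, ?_⟩
  · simpa [hq0] using hq
  · simp [← hq, ← hr]

theorem stmt11 (w : List Bool) (hw : w ≠ []) (h : RightSpecialSturmian w) :
    Xor' (ClosedWord (w ++ [false])) (ClosedWord (w ++ [true])) := by
  obtain ⟨v, hv⟩ := exists_isLongestBorder hw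
  obtain ⟨y, hy⟩ := hv.1.exists_append_singleton_prefix
  have hclosed := h.closedWord_append hv hy
  have hopen := not_closedWord_append hv hy (Bool.not_ne_self y)
  cases y
  · exact Or.inl ⟨hclosed, hopen⟩
  · exact Or.inr ⟨hclosed, hopen⟩
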